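/- Johnson-type upper bound for bursts: for positive integers w ≥ r, b, q ≥ 2 and any code S ⊆ Σ_q^n that has minimum cyclic burst distance at least 2r+1 and is contained in the burst ball Ball_{w,b}(0), we have |S| ≤ (w+1)(q^b−1)^{w−r} n^{w−r}. -/

import Mathlib

open scoped BigOperators

/-- The cyclic interval of length `L` starting at position `i` in `ZMod n`. -/
def cycInt (n : ℕ) (i : ZMod n) (L : ℕ) : Set (ZMod n) :=
  {j | ∃ k : ℕ, k < L ∧ j = i + (k : ZMod n)}

/-- `e` is a burst supported in the cyclic interval starting at `i` of length `L ≤ b`. -/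
def BurstAt {G : Type*} [AddCommGroup G] {n : ℕ} (b : ℕ) (e : ZMod n → G)
    (i : ZMod n) (L : ℕ) : Prop :=
  L ≤ b ∧ ∀ j : ZMod n, e j ≠ 0 → j ∈ cycInt n i L

/-- `e` is a `b≤`-burst: its support lies in a cyclic interval of length at most `b`. -/
def IsBurst {G : Type*} [AddCommGroup G] {n : ℕ} (b : ℕ) (e : ZMod n → G) : Prop :=
  ∃ i L, BurstAt b e i L

/-- `w` is a sum of exactly `t` many `b≤`-bursts. -/
def SumOfBursts {G : Type*} [AddCommGroup G] {n : ℕ} (b t : ℕ) (w : ZMod n → G) : Prop :=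
  ∃ l : List (ZMod n → G), l.length = t ∧ (∀ e ∈ l, IsBurst b e) ∧ l.sum = w

/-- The cyclic burst distance: minimum number of `b≤`-bursts summing to `x - y`. -/
noncomputable def burstDist {G : Type*} [AddCommGroup G] {n : ℕ} (b : ℕ)
    (x y : ZMod n → G) : ℕ :=
  sInf {t | SumOfBursts b t (x - y)}

/-- `w` is a sum of exactly `t` pairwise disjoint `b≤`-bursts (disjoint covering intervals). -/
def SumOfDisjointBursts {G : Type*} [AddCommGroup G] {n : ℕ} (b t : ℕ)
    (w : ZMod n → G) : Prop :=
  ∃ (es : Fin t → ZMod n → G) (ps : Fin t → ZMod n) (Ls : Fin t → ℕ),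
    (∀ m, BurstAt b (es m) (ps m) (Ls m)) ∧
    (∀ m m' : Fin t, m ≠ m' → cycInt n (ps m) (Ls m) ∩ cycInt n (ps m') (Ls m') = ∅) ∧
    ∑ m, es m = w

/-- `B_{≤t,≤b}`: vectors expressible as a sum of at most `t` pairwise disjoint `b≤`-bursts. -/
def BSet (n b t : ℕ) (G : Type*) [AddCommGroup G] : Set (ZMod n → G) :=
  {w | ∃ i ≤ t, SumOfDisjointBursts b i w}

/-- The radius-`t` burst ball around `x`. -/
def burstBall {G : Type*} [AddCommGroup G] {n : ℕ} (b t : ℕ) (x : ZMod n → G) :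
    Set (ZMod n → G) :=
  {y | burstDist b x y ≤ t}

/-- A `(t,b)`-burst-correcting code: radius-`t` burst balls around distinct codewords
are disjoint. -/
def IsBurstCorrecting {G : Type*} [AddCommGroup G] {n : ℕ} (t b : ℕ)
    (C : Set (ZMod n → G)) : Prop :=
  ∀ u ∈ C, ∀ v ∈ C, u ≠ v → burstBall b t u ∩ burstBall b t v = ∅

/-! A codeword of weight at most `w` is a sum of at most `w` nonzero bursts. Two codewords whose
decompositions agree after the first `r` bursts differ by a sum of at most `2r` bursts, so by the
distance assumption they coincide: a codeword is determined by the tail of its decomposition, a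
list of at most `w - r` nonzero bursts. There are at most `n (q^b - 1)` nonzero bursts (a start
position and a nonzero pattern of length `b`), hence at most `(w - r + 1) (n (q^b - 1))^(w - r)`
such tails. -/

theorem List.sum_filter_ne_zero {M : Type*} [AddMonoid M] [DecidableEq M] (l : List M) :
    (l.filter (· ≠ 0)).sum = l.sum := by
  induction l with
  | nil => rfl
  | cons a l ih =>
    rw [List.filter_cons]
    by_cases ha : a = 0 <;> simp_all

theorem ncard_setOf_lists_le {β : Type*} {B : Set β} (hB : B.Finite) (m : ℕ) :
    {l : List β | l.length ≤ m ∧ ∀ e ∈ l, e ∈ B}.ncard ≤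
      ∑ t ∈ Finset.range (m + 1), B.ncard ^ t := by
  have := hB.to_subtype
  let ofTuple : (Σ t : Fin (m + 1), Fin t → B) → List β := fun p => List.ofFn fun k => (p.2 k : β)
  have hsub : {l : List β | l.length ≤ m ∧ ∀ e ∈ l, e ∈ B} ⊆ Set.range ofTuple := by
    rintro l ⟨hlen, hl⟩
    exact ⟨⟨⟨l.length, Nat.lt_succ_of_le hlen⟩, fun k => ⟨l.get k, hl _ (List.get_mem l k)⟩⟩,
      List.ofFn_get l⟩
  calc _ ≤ (Set.range ofTuple).ncard := Set.ncard_le_ncard hsub (Set.finite_range ofTuple)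
    _ ≤ Nat.card (Σ t : Fin (m + 1), Fin t → B) := Finite.card_range_le ofTuple
    _ = ∑ t ∈ Finset.range (m + 1), B.ncard ^ t := by
      simp only [Nat.card_sigma, Nat.card_fun, Nat.card_fin, Nat.card_coe_set_eq]
      exact Fin.sum_univ_eq_sum_range (B.ncard ^ ·) (m + 1)

theorem ncard_le_of_injOn_lists {α β : Type*} [Finite β] {S : Set α} {B : Set β} {m N : ℕ}
    (hBN : B.ncard ≤ N) (hN : 1 ≤ N) (f : α → List β) (hf : Set.InjOn f S)
    (hlen : ∀ x ∈ S, (f x).length ≤ m) (hmem : ∀ x ∈ S, ∀ e ∈ f x, e ∈ B) :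
    S.ncard ≤ (m + 1) * N ^ m :=
  calc S.ncard ≤ {l : List β | l.length ≤ m ∧ ∀ e ∈ l, e ∈ B}.ncard :=
        Set.ncard_le_ncard_of_injOn f (fun x hx => ⟨hlen x hx, hmem x hx⟩) hf
          ((List.finite_length_le β m).subset fun _ hl => hl.1)
    _ ≤ ∑ t ∈ Finset.range (m + 1), B.ncard ^ t := ncard_setOf_lists_le B.toFinite m
    _ ≤ ∑ _t ∈ Finset.range (m + 1), N ^ m :=
        Finset.sum_le_sum fun t ht => (Nat.pow_le_pow_left hBN t).trans
          (Nat.pow_le_pow_right hN (Nat.lt_succ_iff.mp (Finset.mem_range.mp ht)))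
    _ = (m + 1) * N ^ m := by rw [Finset.sum_const, Finset.card_range, smul_eq_mul]

section Bursts

variable {G : Type*} [AddCommGroup G] {n b : ℕ}

theorem BurstAt.zero (i : ZMod n) {L : ℕ} (hL : L ≤ b) : BurstAt b (0 : ZMod n → G) i L :=
  ⟨hL, fun _ h => absurd rfl h⟩

theorem BurstAt.exists_fin_of_ne_zero {e : ZMod n → G} {i : ZMod n} {L : ℕ}
    (he : BurstAt b e i L) {j : ZMod n} (hj : e j ≠ 0) : ∃ k : Fin b, j = i + (k : ℕ) := by
  obtain ⟨k, hk, rfl⟩ := he.2 j hj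
  exact ⟨⟨k, hk.trans_le he.1⟩, rfl⟩

theorem BurstAt.ext {e e' : ZMod n → G} {i : ZMod n} {L L' : ℕ} (he : BurstAt b e i L)
    (he' : BurstAt b e' i L') (h : ∀ k : Fin b, e (i + (k : ℕ)) = e' (i + (k : ℕ))) : e = e' := by
  funext j
  by_cases hj : e j = 0 ∧ e' j = 0
  · rw [hj.1, hj.2]
  · obtain ⟨k, rfl⟩ : ∃ k : Fin b, j = i + (k : ℕ) := by
      rcases not_and_or.mp hj with hj | hj
      exacts [he.exists_fin_of_ne_zero hj, he'.exists_fin_of_ne_zero hj]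
    exact h k

theorem IsBurst.neg {e : ZMod n → G} (h : IsBurst b e) : IsBurst b (-e) := by
  obtain ⟨i, L, hL, hs⟩ := h
  exact ⟨i, L, hL, fun j hj => hs j (by simpa using hj)⟩

theorem ncard_setOf_isBurst_ne_zero_le [NeZero n] [Finite G] :
    {e : ZMod n → G | IsBurst b e ∧ e ≠ 0}.ncard ≤ n * (Nat.card G ^ b - 1) := by
  choose! start len hstart using fun (e : ZMod n → G) (he : IsBurst b e) => he
  let code (e : ZMod n → G) : ZMod n × (Fin b → G) := (start e, fun k => e (start e + (k : ℕ)))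
  calc _ ≤ (Set.univ ×ˢ {0}ᶜ : Set (ZMod n × (Fin b → G))).ncard := by
        refine Set.ncard_le_ncard_of_injOn code ?_ ?_
        · rintro e ⟨he, hne⟩
          exact ⟨trivial, fun h0 =>
            hne ((hstart e he).ext (BurstAt.zero (G := G) _ (hstart e he).1) (congrFun h0))⟩
        · rintro e ⟨he, -⟩ e' ⟨he', -⟩ h
          obtain ⟨hi, hpat⟩ := Prod.mk.inj h
          exact (hstart e he).ext (hi ▸ hstart e' he') fun k => by
            rw [congrFun hpat k, hi]
    _ = n * (Nat.card G ^ b - 1) := by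
      rw [Set.ncard_prod, Set.ncard_univ, Nat.card_zmod, Set.ncard_compl, Set.ncard_singleton,
        Nat.card_fun, Nat.card_fin]

theorem exists_sumOfBursts [NeZero n] (hb : 1 ≤ b) (v : ZMod n → G) : ∃ t, SumOfBursts b t v := by
  classical
  refine ⟨_, Finset.univ.toList.map fun j => Pi.single j (v j), rfl, ?_,
    by rw [Finset.sum_map_toList, Finset.univ_sum_single]⟩
  simp only [List.mem_map]
  rintro _ ⟨j, -, rfl⟩
  refine ⟨j, 1, hb, fun j' hj' => ⟨0, one_pos, ?_⟩⟩
  by_contra hne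
  exact hj' (Pi.single_eq_of_ne (by simpa using hne) _)

theorem SumOfBursts.neg {t : ℕ} {v : ZMod n → G} (h : SumOfBursts b t v) :
    SumOfBursts b t (-v) := by
  obtain ⟨l, rfl, hl, rfl⟩ := h
  refine ⟨l.map (-·), List.length_map _, ?_, (List.sum_neg l).symm⟩
  simp only [List.mem_map]
  rintro _ ⟨e, he, rfl⟩
  exact (hl e he).neg

theorem SumOfBursts.add {s t : ℕ} {u v : ZMod n → G} (hu : SumOfBursts b s u)
    (hv : SumOfBursts b t v) : SumOfBursts b (s + t) (u + v) := by
  obtain ⟨l, rfl, hl, rfl⟩ := hu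
  obtain ⟨l', rfl, hl', rfl⟩ := hv
  refine ⟨l ++ l', List.length_append, fun e he => ?_, List.sum_append⟩
  rcases List.mem_append.mp he with he | he
  exacts [hl e he, hl' e he]

theorem SumOfBursts.exists_ne_zero {t : ℕ} {v : ZMod n → G} (h : SumOfBursts b t v) :
    ∃ l : List (ZMod n → G), l.length ≤ t ∧ (∀ e ∈ l, IsBurst b e ∧ e ≠ 0) ∧ l.sum = v := by
  classical
  obtain ⟨l, rfl, hl, rfl⟩ := h
  refine ⟨l.filter (· ≠ 0), List.length_filter_le _ _, fun e he => ?_, l.sum_filter_ne_zero⟩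
  rw [List.mem_filter, decide_eq_true_iff] at he
  exact ⟨hl e he.1, he.2⟩

theorem burstDist_le_of_sumOfBursts {x y : ZMod n → G} {t : ℕ} (h : SumOfBursts b t (x - y)) :
    burstDist b x y ≤ t :=
  Nat.sInf_le h

theorem sumOfBursts_burstDist [NeZero n] (hb : 1 ≤ b) (x y : ZMod n → G) :
    SumOfBursts b (burstDist b x y) (x - y) :=
  Nat.sInf_mem (exists_sumOfBursts hb (x - y))

theorem exists_bursts_of_mem_burstBall [NeZero n] (hb : 1 ≤ b) {w : ℕ} {x : ZMod n → G}
    (hx : x ∈ burstBall b w 0) :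
    ∃ l : List (ZMod n → G), l.length ≤ w ∧ (∀ e ∈ l, IsBurst b e ∧ e ≠ 0) ∧ l.sum = x := by
  obtain ⟨l, hlen, hl, hsum⟩ := (sumOfBursts_burstDist hb 0 x).neg.exists_ne_zero
  exact ⟨l, hlen.trans hx, hl, by simpa using hsum⟩

theorem burstDist_sum_le_of_drop_eq {l l' : List (ZMod n → G)} (hl : ∀ e ∈ l, IsBurst b e)
    (hl' : ∀ e ∈ l', IsBurst b e) (r : ℕ) (h : l.drop r = l'.drop r) :
    burstDist b l.sum l'.sum ≤ 2 * r := by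
  have hhead {k : List (ZMod n → G)} (hk : ∀ e ∈ k, IsBurst b e) :
      SumOfBursts b (k.take r).length (k.take r).sum :=
    ⟨_, rfl, fun e he => hk e (List.mem_of_mem_take he), rfl⟩
  have hdiff : l.sum - l'.sum = (l.take r).sum - (l'.take r).sum := by
    rw [← l.take_append_drop r, ← l'.take_append_drop r, List.sum_append, List.sum_append,
      List.take_append_drop, List.take_append_drop, h]
    abel
  have hsum := (hhead hl).add (hhead hl').neg
  rw [← sub_eq_add_neg, ← hdiff] at hsum
  refine (burstDist_le_of_sumOfBursts hsum).trans ?_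
  simp only [List.length_take]
  omega

end Bursts

theorem johnson_upper_bound_bursts_general {G : Type*} [AddCommGroup G] [Fintype G]
    (n w r b q : ℕ) (hn : 1 ≤ n) (hb : 1 ≤ b)
    (hq : Fintype.card G = q) (hq2 : 2 ≤ q)
    (S : Set (ZMod n → G)) (hS : S ⊆ burstBall b w (0 : ZMod n → G))
    (hd : ∀ x ∈ S, ∀ y ∈ S, x ≠ y → 2 * r + 1 ≤ burstDist b x y) :
    S.ncard ≤ (w + 1) * (q ^ b - 1) ^ (w - r) * n ^ (w - r) := by
  have : NeZero n := ⟨by omega⟩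
  choose! L hL_length hL_bursts hL_sum using fun (x : ZMod n → G) (hx : x ∈ S) =>
    exists_bursts_of_mem_burstBall hb (hS hx)
  have hB : {e : ZMod n → G | IsBurst b e ∧ e ≠ 0}.ncard ≤ n * (q ^ b - 1) := by
    simpa only [Nat.card_eq_fintype_card, hq] using ncard_setOf_isBurst_ne_zero_le (G := G)
  have hN : 1 ≤ n * (q ^ b - 1) := by
    have := Nat.le_self_pow (by omega : b ≠ 0) q
    exact Nat.one_le_iff_ne_zero.mpr (mul_ne_zero (by omega) (by omega))
  have htail : Set.InjOn (fun x => (L x).drop r) S := by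
    intro x hx y hy hxy
    by_contra hne
    have hle := burstDist_sum_le_of_drop_eq (fun e he => (hL_bursts x hx e he).1)
      (fun e he => (hL_bursts y hy e he).1) r hxy
    rw [hL_sum x hx, hL_sum y hy] at hle
    have := hd x hx y hy hne
    omega
  calc S.ncard ≤ (w - r + 1) * (n * (q ^ b - 1)) ^ (w - r) :=
        ncard_le_of_injOn_lists hB hN _ htail
          (fun x hx => (List.length_drop ..).trans_le (Nat.sub_le_sub_right (hL_length x hx) r))
          fun x hx e he => hL_bursts x hx e (List.mem_of_mem_drop he)
    _ ≤ (w + 1) * (q ^ b - 1) ^ (w - r) * n ^ (w - r) := by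
        rw [mul_pow, mul_comm (n ^ _), ← mul_assoc]
        gcongr
        omega

/-- Johnson-type upper bound: any code S contained in Ball_{w,b}(0) with
minimum cyclic burst distance at least 2r+1 satisfies
|S| ≤ (w+1)(q^b−1)^{w−r} n^{w−r}. -/
theorem johnson_upper_bound_bursts {G : Type*} [AddCommGroup G] [Fintype G]
    (n w r b q : ℕ) (hn : 1 ≤ n) (hw : r ≤ w) (hr : 1 ≤ r) (hb : 1 ≤ b)
    (hq : Fintype.card G = q) (hq2 : 2 ≤ q)
    (S : Set (ZMod n → G)) (hS : S ⊆ burstBall b w (0 : ZMod n → G))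
    (hd : ∀ x ∈ S, ∀ y ∈ S, x ≠ y → 2 * r + 1 ≤ burstDist b x y) :
    S.ncard ≤ (w + 1) * (q ^ b - 1) ^ (w - r) * n ^ (w - r) :=
  johnson_upper_bound_bursts_general n w r b q hn hb hq hq2 S hS hd
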